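/- arXiv:1909.08366 — 2 statements merged into one kernel-verified Lean document; each statement's English description precedes it below -/
import Mathlib

section
/- Let P and Q be joint distributions of a stationary process over sequences, and suppose both have Markov order at most κ, meaning P(x_{L+κ} | x_{0:L+κ}) = P(x_{L+κ} | x_{L:L+κ}) for all L (and similarly for Q). Then the fidelity over sequences of length L+κ+1 satisfies F(P,Q; L+κ+1) ≤ F(P,Q; L+κ) · max_{x_{L:L+κ}} Σ_{x_{L+κ}} √(P(x_{L+κ}|x_{L:L+κ}) · Q(x_{L+κ}|x_{L:L+κ})). -/
theorem stmt11 {A : Type*} [Fintype A] [Nonempty A] (κ : ℕ)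
    (P Q : List A → ℝ) (pc qc : List A → A → ℝ)
    (hP0 : ∀ w, 0 ≤ P w) (hQ0 : ∀ w, 0 ≤ Q w)
    (hpc0 : ∀ w a, 0 ≤ pc w a) (hqc0 : ∀ w a, 0 ≤ qc w a)
    (hpc1 : ∀ w, ∑ a, pc w a = 1) (hqc1 : ∀ w, ∑ a, qc w a = 1)
    (hPmarkov : ∀ (w : List A) (a : A), κ ≤ w.length →
      P (w ++ [a]) = P w * pc (w.drop (w.length - κ)) a)
    (hQmarkov : ∀ (w : List A) (a : A), κ ≤ w.length →
      Q (w ++ [a]) = Q w * qc (w.drop (w.length - κ)) a)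
    (F : ℕ → ℝ)
    (hF : ∀ L : ℕ, F L = ∑ s : Fin L → A, Real.sqrt (P (List.ofFn s) * Q (List.ofFn s)))
    (M : ℝ)
    (hM : IsGreatest {m : ℝ | ∃ h : Fin κ → A,
      m = ∑ a, Real.sqrt (pc (List.ofFn h) a * qc (List.ofFn h) a)} M)
    (L : ℕ) :
    F (L + κ + 1) ≤ F (L + κ) * M := by
  rw [hF (L + κ + 1), hF (L + κ), Finset.sum_mul]
  rw [← Equiv.sum_comp (Fin.snocEquiv (fun _ : Fin (L + κ + 1) => A))
    (fun s => Real.sqrt (P (List.ofFn s) * Q (List.ofFn s))), Fintype.sum_prod_type,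
    Finset.sum_comm]
  apply Finset.sum_le_sum
  intro g _
  have hofn : ∀ a : A, List.ofFn ((Fin.snocEquiv (fun _ : Fin (L + κ + 1) => A)) (a, g))
      = List.ofFn g ++ [a] := by
    intro a
    rw [List.ofFn_succ']
    simp [Fin.snocEquiv, List.concat_eq_append]
  have hlen : (List.ofFn g).length = L + κ := by simp
  have hκ : κ ≤ (List.ofFn g).length := by simp
  have hdrop : (List.ofFn g).drop ((List.ofFn g).length - κ)
      = List.ofFn (fun i : Fin κ => g (Fin.natAdd L i)) := by
    rw [hlen, Nat.add_sub_cancel, List.ofFn_add (f := g)]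
    rw [List.drop_left' (by simp)]
  have key : ∀ a : A,
      Real.sqrt (P (List.ofFn g ++ [a]) * Q (List.ofFn g ++ [a]))
      = Real.sqrt (P (List.ofFn g) * Q (List.ofFn g)) *
        Real.sqrt (pc (List.ofFn (fun i : Fin κ => g (Fin.natAdd L i))) a *
                   qc (List.ofFn (fun i : Fin κ => g (Fin.natAdd L i))) a) := by
    intro a
    rw [hPmarkov _ _ hκ, hQmarkov _ _ hκ, hdrop,
      show ∀ p q b c : ℝ, p * b * (q * c) = p * q * (b * c) by intros; ring,
      Real.sqrt_mul (mul_nonneg (hP0 _) (hQ0 _))]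
  simp only [hofn, key, ← Finset.mul_sum]
  apply mul_le_mul_of_nonneg_left _ (Real.sqrt_nonneg _)
  exact hM.2 ⟨fun i : Fin κ => g (Fin.natAdd L i), rfl⟩
end

section
/- Let P and Q be stationary processes over a finite alphabet with Markov order at most κ, and suppose the limit 2R_F = lim_{L→∞} -(1/L)·log₂ F(P,Q;L) exists. Then R^↓ ≤ 2R_F ≤ R^↑, where R^↑ = max over histories x_{-κ:0} of -log₂ Σ_x √(P(x|x_{-κ:0})Q(x|x_{-κ:0})) and R^↓ is the corresponding minimum. -/
open Real Filter

lemma ofFn_snoc'' {A : Type*} {n : ℕ} (t : Fin n → A) (a : A) :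
    List.ofFn (Fin.snoc t a) = List.ofFn t ++ [a] := by
  rw [List.ofFn_succ']
  simp [List.concat_eq_append]

theorem stmt12 {A : Type*} [Fintype A] [Nonempty A] (κ : ℕ)
    (P Q : List A → ℝ) (pc qc : List A → A → ℝ)
    (hP0 : ∀ w, 0 ≤ P w) (hQ0 : ∀ w, 0 ≤ Q w)
    (hpc0 : ∀ w a, 0 ≤ pc w a) (hqc0 : ∀ w a, 0 ≤ qc w a)
    (hpc1 : ∀ w, ∑ a, pc w a = 1) (hqc1 : ∀ w, ∑ a, qc w a = 1)
    (hPmarkov : ∀ (w : List A) (a : A), κ ≤ w.length →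
      P (w ++ [a]) = P w * pc (w.drop (w.length - κ)) a)
    (hQmarkov : ∀ (w : List A) (a : A), κ ≤ w.length →
      Q (w ++ [a]) = Q w * qc (w.drop (w.length - κ)) a)
    (F : ℕ → ℝ)
    (hF : ∀ L : ℕ, F L = ∑ s : Fin L → A, Real.sqrt (P (List.ofFn s) * Q (List.ofFn s)))
    (hFκ : 0 < F κ)
    (hfidpos : ∀ h : Fin κ → A,
      0 < ∑ a, Real.sqrt (pc (List.ofFn h) a * qc (List.ofFn h) a))
    (RF : ℝ)
    (hRF : Filter.Tendsto (fun L : ℕ => -(1/(L:ℝ)) * Real.logb 2 (F L))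
      Filter.atTop (nhds (2 * RF)))
    (Rup Rdown : ℝ)
    (hRup : IsGreatest {x : ℝ | ∃ h : Fin κ → A,
      x = -Real.logb 2 (∑ a, Real.sqrt (pc (List.ofFn h) a * qc (List.ofFn h) a))} Rup)
    (hRdown : IsLeast {x : ℝ | ∃ h : Fin κ → A,
      x = -Real.logb 2 (∑ a, Real.sqrt (pc (List.ofFn h) a * qc (List.ofFn h) a))} Rdown) :
    Rdown ≤ 2 * RF ∧ 2 * RF ≤ Rup := by
  classical
  set c : ℝ := (2:ℝ) ^ (-Rup) with hc
  set C : ℝ := (2:ℝ) ^ (-Rdown) with hCdef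
  have h2 : (1:ℝ) < 2 := one_lt_two
  have hcpos : 0 < c := Real.rpow_pos_of_pos two_pos _
  have hCpos : 0 < C := Real.rpow_pos_of_pos two_pos _
  -- bounds on the one-step fidelity
  have hgub : ∀ h : Fin κ → A,
      (∑ a, Real.sqrt (pc (List.ofFn h) a * qc (List.ofFn h) a)) ≤ C := by
    intro h
    have h1 : Rdown ≤ -Real.logb 2 (∑ a, Real.sqrt (pc (List.ofFn h) a * qc (List.ofFn h) a)) :=
      hRdown.2 ⟨h, rfl⟩
    have hp := hfidpos h
    calc (∑ a, Real.sqrt (pc (List.ofFn h) a * qc (List.ofFn h) a))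
        = (2:ℝ) ^ (Real.logb 2 (∑ a, Real.sqrt (pc (List.ofFn h) a * qc (List.ofFn h) a))) :=
          (Real.rpow_logb two_pos (by norm_num) hp).symm
      _ ≤ C := by
          rw [hCdef]
          exact (Real.rpow_le_rpow_left_iff h2).mpr (by linarith)
  have hglb : ∀ h : Fin κ → A,
      c ≤ (∑ a, Real.sqrt (pc (List.ofFn h) a * qc (List.ofFn h) a)) := by
    intro h
    have h1 : -Real.logb 2 (∑ a, Real.sqrt (pc (List.ofFn h) a * qc (List.ofFn h) a)) ≤ Rup :=
      hRup.2 ⟨h, rfl⟩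
    have hp := hfidpos h
    calc c = (2:ℝ) ^ (-Rup) := hc
      _ ≤ (2:ℝ) ^ (Real.logb 2 (∑ a, Real.sqrt (pc (List.ofFn h) a * qc (List.ofFn h) a))) :=
          (Real.rpow_le_rpow_left_iff h2).mpr (by linarith)
      _ = _ := Real.rpow_logb two_pos (by norm_num) hp
  -- bounds for arbitrary lists of length κ
  have key : ∀ w : List A, w.length = κ →
      c ≤ (∑ a, Real.sqrt (pc w a * qc w a)) ∧ (∑ a, Real.sqrt (pc w a * qc w a)) ≤ C := by
    intro w hw
    subst hw
    have := hglb (w.get)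
    have := hgub (w.get)
    rw [List.ofFn_get] at *
    exact ⟨by assumption, by assumption⟩
  -- one-step recursion bound
  have hstep : ∀ L, κ ≤ L → c * F L ≤ F (L+1) ∧ F (L+1) ≤ C * F L := by
    intro L hL
    have hsplit : F (L+1) = ∑ t : Fin L → A,
        Real.sqrt (P (List.ofFn t) * Q (List.ofFn t)) *
        (∑ a, Real.sqrt (pc ((List.ofFn t).drop (L - κ)) a *
                          qc ((List.ofFn t).drop (L - κ)) a)) := by
      rw [hF]
      rw [← (Fin.snocEquiv (fun _ : Fin (L+1) => A)).sum_comp]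
      rw [Fintype.sum_prod_type]
      rw [Finset.sum_comm]
      refine Finset.sum_congr rfl (fun t _ => ?_)
      rw [Finset.mul_sum]
      refine Finset.sum_congr rfl (fun a _ => ?_)
      have he : (Fin.snocEquiv (fun _ : Fin (L+1) => A)) (a, t) = Fin.snoc t a := by
        funext i; rfl
      rw [he, ofFn_snoc'']
      have hlen : (List.ofFn t).length = L := List.length_ofFn
      rw [hPmarkov _ _ (by rw [hlen]; exact hL), hQmarkov _ _ (by rw [hlen]; exact hL), hlen]
      have hre : (P (List.ofFn t) * pc ((List.ofFn t).drop (L - κ)) a) *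
          (Q (List.ofFn t) * qc ((List.ofFn t).drop (L - κ)) a) =
          (P (List.ofFn t) * Q (List.ofFn t)) *
          (pc ((List.ofFn t).drop (L - κ)) a * qc ((List.ofFn t).drop (L - κ)) a) := by ring
      rw [hre, Real.sqrt_mul (mul_nonneg (hP0 _) (hQ0 _))]
    have hbd : ∀ t : Fin L → A,
        c ≤ (∑ a, Real.sqrt (pc ((List.ofFn t).drop (L - κ)) a *
                              qc ((List.ofFn t).drop (L - κ)) a)) ∧
        (∑ a, Real.sqrt (pc ((List.ofFn t).drop (L - κ)) a *
                          qc ((List.ofFn t).drop (L - κ)) a)) ≤ C := by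
      intro t
      apply key
      simp [List.length_drop]
      omega
    constructor
    · rw [hsplit, hF, Finset.mul_sum]
      refine Finset.sum_le_sum (fun t _ => ?_)
      rw [mul_comm c]
      exact mul_le_mul_of_nonneg_left (hbd t).1 (Real.sqrt_nonneg _)
    · rw [hsplit, hF, Finset.mul_sum]
      refine Finset.sum_le_sum (fun t _ => ?_)
      rw [mul_comm C]
      exact mul_le_mul_of_nonneg_left (hbd t).2 (Real.sqrt_nonneg _)
  -- iterate
  have hiter : ∀ n, c ^ n * F κ ≤ F (κ + n) ∧ F (κ + n) ≤ C ^ n * F κ := by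
    intro n
    induction n with
    | zero => simp
    | succ n ih =>
      have hs := hstep (κ + n) (Nat.le_add_right _ _)
      have h1 : κ + (n+1) = (κ + n) + 1 := by ring
      rw [h1]
      constructor
      · calc c ^ (n+1) * F κ = c * (c ^ n * F κ) := by ring
          _ ≤ c * F (κ + n) := by
              exact mul_le_mul_of_nonneg_left ih.1 hcpos.le
          _ ≤ F ((κ + n) + 1) := hs.1
      · calc F ((κ + n) + 1) ≤ C * F (κ + n) := hs.2
          _ ≤ C * (C ^ n * F κ) := mul_le_mul_of_nonneg_left ih.2 hCpos.le
          _ = C ^ (n+1) * F κ := by ring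
  have hFpos : ∀ n, 0 < F (κ + n) := fun n =>
    lt_of_lt_of_le (by positivity) (hiter n).1
  have hlogC : Real.logb 2 C = -Rdown := Real.logb_rpow two_pos (by norm_num)
  have hlogc : Real.logb 2 c = -Rup := Real.logb_rpow two_pos (by norm_num)
  -- limit comparison functions
  have hTlow : Tendsto (fun L : ℕ => ((L:ℝ) - κ)/L * Rdown - Real.logb 2 (F κ) / L)
      atTop (nhds Rdown) := by
    have h1 : Tendsto (fun L : ℕ => (1 - (κ:ℝ) * (1/L)) * Rdown - Real.logb 2 (F κ) * (1/L))
        atTop (nhds ((1 - (κ:ℝ) * 0) * Rdown - Real.logb 2 (F κ) * 0)) := by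
      exact (((tendsto_const_nhds.sub
        (tendsto_const_nhds.mul tendsto_one_div_atTop_nhds_zero_nat)).mul
        tendsto_const_nhds).sub
        (tendsto_const_nhds.mul tendsto_one_div_atTop_nhds_zero_nat))
    simp only [mul_zero, sub_zero, one_mul] at h1
    refine Tendsto.congr' ?_ h1
    filter_upwards [eventually_ge_atTop 1] with L hL
    have hL0 : (L:ℝ) ≠ 0 := by positivity
    field_simp
  have hTup : Tendsto (fun L : ℕ => ((L:ℝ) - κ)/L * Rup - Real.logb 2 (F κ) / L)
      atTop (nhds Rup) := by
    have h1 : Tendsto (fun L : ℕ => (1 - (κ:ℝ) * (1/L)) * Rup - Real.logb 2 (F κ) * (1/L))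
        atTop (nhds ((1 - (κ:ℝ) * 0) * Rup - Real.logb 2 (F κ) * 0)) := by
      exact (((tendsto_const_nhds.sub
        (tendsto_const_nhds.mul tendsto_one_div_atTop_nhds_zero_nat)).mul
        tendsto_const_nhds).sub
        (tendsto_const_nhds.mul tendsto_one_div_atTop_nhds_zero_nat))
    simp only [mul_zero, sub_zero, one_mul] at h1
    refine Tendsto.congr' ?_ h1
    filter_upwards [eventually_ge_atTop 1] with L hL
    have hL0 : (L:ℝ) ≠ 0 := by positivity
    field_simp
  constructor
  · refine le_of_tendsto_of_tendsto hTlow hRF ?_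
    filter_upwards [eventually_ge_atTop (κ + 1)] with L hL
    obtain ⟨n, rfl⟩ : ∃ n, L = κ + n := ⟨L - κ, by omega⟩
    have hL0 : (0:ℝ) < ((κ + n : ℕ):ℝ) := by
      have h1 : (1:ℕ) ≤ κ + n := by omega
      exact_mod_cast Nat.lt_of_lt_of_le Nat.zero_lt_one h1
    have hFp := hFpos n
    have hlog : Real.logb 2 (F (κ + n)) ≤ (n:ℝ) * (-Rdown) + Real.logb 2 (F κ) := by
      have h1 : Real.logb 2 (F (κ + n)) ≤ Real.logb 2 (C ^ n * F κ) :=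
        Real.logb_le_logb_of_le h2 hFp (hiter n).2
      have h2' : Real.logb 2 (C ^ n * F κ) = (n:ℝ) * (-Rdown) + Real.logb 2 (F κ) := by
        rw [Real.logb_mul (by positivity) (by positivity), Real.logb_pow, hlogC]
      linarith
    have hdiv : Real.logb 2 (F (κ + n)) / ((κ+n:ℕ):ℝ) ≤
        ((n:ℝ) * (-Rdown) + Real.logb 2 (F κ)) / ((κ+n:ℕ):ℝ) :=
      (div_le_div_iff_of_pos_right hL0).mpr hlog
    have heq : (((κ+n:ℕ):ℝ) - κ)/((κ+n:ℕ):ℝ) * Rdown - Real.logb 2 (F κ) / ((κ+n:ℕ):ℝ) =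
        -(((n:ℝ) * (-Rdown) + Real.logb 2 (F κ)) / ((κ+n:ℕ):ℝ)) := by
      push_cast
      field_simp
      ring
    have heq2 : -(1/((κ+n:ℕ):ℝ)) * Real.logb 2 (F (κ+n)) =
        -(Real.logb 2 (F (κ+n)) / ((κ+n:ℕ):ℝ)) := by ring
    rw [heq, heq2]
    exact neg_le_neg hdiv
  · refine le_of_tendsto_of_tendsto hRF hTup ?_
    filter_upwards [eventually_ge_atTop (κ + 1)] with L hL
    obtain ⟨n, rfl⟩ : ∃ n, L = κ + n := ⟨L - κ, by omega⟩
    have hL0 : (0:ℝ) < ((κ + n : ℕ):ℝ) := by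
      have h1 : (1:ℕ) ≤ κ + n := by omega
      exact_mod_cast Nat.lt_of_lt_of_le Nat.zero_lt_one h1
    have hFp := hFpos n
    have hlog : (n:ℝ) * (-Rup) + Real.logb 2 (F κ) ≤ Real.logb 2 (F (κ + n)) := by
      have h1 : Real.logb 2 (c ^ n * F κ) ≤ Real.logb 2 (F (κ + n)) :=
        Real.logb_le_logb_of_le h2 (by positivity) (hiter n).1
      have h2' : Real.logb 2 (c ^ n * F κ) = (n:ℝ) * (-Rup) + Real.logb 2 (F κ) := by
        rw [Real.logb_mul (by positivity) (by positivity), Real.logb_pow, hlogc]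
      linarith
    have hdiv : ((n:ℝ) * (-Rup) + Real.logb 2 (F κ)) / ((κ+n:ℕ):ℝ) ≤
        Real.logb 2 (F (κ + n)) / ((κ+n:ℕ):ℝ) :=
      (div_le_div_iff_of_pos_right hL0).mpr hlog
    have heq : (((κ+n:ℕ):ℝ) - κ)/((κ+n:ℕ):ℝ) * Rup - Real.logb 2 (F κ) / ((κ+n:ℕ):ℝ) =
        -(((n:ℝ) * (-Rup) + Real.logb 2 (F κ)) / ((κ+n:ℕ):ℝ)) := by
      push_cast
      field_simp
      ring
    have heq2 : -(1/((κ+n:ℕ):ℝ)) * Real.logb 2 (F (κ+n)) =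
        -(Real.logb 2 (F (κ+n)) / ((κ+n:ℕ):ℝ)) := by ring
    rw [heq, heq2]
    exact neg_le_neg hdiv
end
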